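/- Let X be a Banach space with a semi-normalized Schauder basis (eₙ). If ‖G_N(x)‖ ≤ ‖x‖ for all x, N, and admissible greedy sets (C_w = 1), then also ‖x − G_N(x)‖ ≤ ‖x‖ for all x, N, and admissible greedy sets (C_t = 1); hence the basis is 1-quasi-greedy. -/

import Mathlib

open Finset Filter

/-- A Schauder basis of a real Banach space, given with its biorthogonal functionals. -/
structure RealSchauderBasis (X : Type*) [NormedAddCommGroup X] [NormedSpace ℝ X] where
  e : ℕ → X
  coord : ℕ → X →L[ℝ] ℝ
  biorth : ∀ m n, coord m (e n) = if m = n then 1 else 0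
  expansion : ∀ x : X, Tendsto (fun N => ∑ n ∈ Finset.range N, coord n x • e n)
    atTop (nhds x)

/-- `Λ` is an admissible greedy set for `x`: every coefficient inside `Λ`
dominates every coefficient outside. -/
def IsGreedySet {X : Type*} [NormedAddCommGroup X] [NormedSpace ℝ X]
    (B : RealSchauderBasis X) (x : X) (Λ : Finset ℕ) : Prop :=
  ∀ j ∈ Λ, ∀ k ∉ Λ, |B.coord k x| ≤ |B.coord j x|

/-- The corresponding greedy approximation `G_N(x)` with greedy set `Λ`. -/
noncomputable def greedySum {X : Type*} [NormedAddCommGroup X] [NormedSpace ℝ X]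
    (B : RealSchauderBasis X) (x : X) (Λ : Finset ℕ) : X :=
  ∑ j ∈ Λ, B.coord j x • B.e j

/-- The basis is semi-normalized. -/
def SemiNormalized {X : Type*} [NormedAddCommGroup X] [NormedSpace ℝ X]
    (B : RealSchauderBasis X) : Prop :=
  ∃ c C : ℝ, 0 < c ∧ ∀ n, c ≤ ‖B.e n‖ ∧ ‖B.e n‖ ≤ C

/-! If `C_w = 1`, then for a finitely supported vector `y` and an index `n` outside its support,
the nonzero coordinates of `y` form a greedy set of `y + t • e n` as soon as `|t|` is below all of
them, so `‖y‖ ≤ ‖y + t • e n‖` for small `t`. A local minimum of the convex function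
`t ↦ ‖y + t • e n‖` is a global one, so the inequality holds for every `t`. Removing coordinates one
at a time makes the basis 1-suppression unconditional on finitely supported vectors, and the
partial sums of the expansion of `x` carry this over to `‖x - P_Λ x‖ ≤ ‖x‖` for every finite `Λ`. -/

lemma convexOn_norm_add_smul {E : Type*} [NormedAddCommGroup E] [NormedSpace ℝ E] (y v : E) :
    ConvexOn ℝ Set.univ fun t : ℝ => ‖y + t • v‖ := by
  have := (convexOn_norm (E := E) convex_univ).comp_affineMap (AffineMap.lineMap y (y + v))
  simpa [Function.comp_def, AffineMap.lineMap_apply, add_comm] using this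

namespace RealSchauderBasis

variable {X : Type*} [NormedAddCommGroup X] [NormedSpace ℝ X] (B : RealSchauderBasis X)

lemma coord_sum_smul_e (S : Finset ℕ) (c : ℕ → ℝ) (k : ℕ) :
    B.coord k (∑ j ∈ S, c j • B.e j) = if k ∈ S then c k else 0 := by
  simp only [map_sum, map_smul, smul_eq_mul, B.biorth, mul_ite, mul_one, mul_zero,
    Finset.sum_ite_eq]

lemma coord_sum_add_smul_e {S : Finset ℕ} {n : ℕ} (hn : n ∉ S) (c : ℕ → ℝ) (u : ℝ) (k : ℕ) :
    B.coord k (∑ j ∈ S, c j • B.e j + u • B.e n) =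
      if k ∈ S then c k else if k = n then u else 0 := by
  rw [map_add, map_smul, coord_sum_smul_e, B.biorth, smul_eq_mul]
  split_ifs <;> simp_all

lemma isGreedySet_sum_add_smul {S : Finset ℕ} {n : ℕ} (hn : n ∉ S) (c : ℕ → ℝ) {u : ℝ}
    (hu : ∀ j ∈ S, c j ≠ 0 → |u| ≤ |c j|) :
    IsGreedySet B (∑ j ∈ S, c j • B.e j + u • B.e n) {j ∈ S | c j ≠ 0} := by
  intro j hj k hk
  rw [Finset.mem_filter] at hj hk
  rw [B.coord_sum_add_smul_e hn, B.coord_sum_add_smul_e hn, if_pos hj.1]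
  split_ifs
  · simp_all
  · exact hu j hj.1 hj.2
  · simp

lemma greedySum_sum_add_smul {S : Finset ℕ} {n : ℕ} (hn : n ∉ S) (c : ℕ → ℝ) (u : ℝ) :
    greedySum B (∑ j ∈ S, c j • B.e j + u • B.e n) {j ∈ S | c j ≠ 0} =
      ∑ j ∈ S, c j • B.e j := by
  calc greedySum B (∑ j ∈ S, c j • B.e j + u • B.e n) {j ∈ S | c j ≠ 0}
      = ∑ j ∈ S with c j ≠ 0, c j • B.e j :=
        Finset.sum_congr rfl fun j hj => by
          rw [B.coord_sum_add_smul_e hn, if_pos (Finset.mem_filter.mp hj).1]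
    _ = ∑ j ∈ S, c j • B.e j :=
        Finset.sum_filter_of_ne fun j _ h hc => h (by rw [hc, zero_smul])

lemma norm_sum_le_norm_sum_add_smul
    (hG : ∀ (x : X) (Λ : Finset ℕ), IsGreedySet B x Λ → ‖greedySum B x Λ‖ ≤ ‖x‖)
    {S : Finset ℕ} {n : ℕ} (hn : n ∉ S) (c : ℕ → ℝ) (t : ℝ) :
    ‖∑ j ∈ S, c j • B.e j‖ ≤ ‖∑ j ∈ S, c j • B.e j + t • B.e n‖ := by
  have hloc : IsLocalMin (fun u : ℝ => ‖∑ j ∈ S, c j • B.e j + u • B.e n‖) 0 := by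
    have hsmall : ∀ᶠ u in nhds (0 : ℝ), ∀ j ∈ S, c j ≠ 0 → |u| ≤ |c j| :=
      (Filter.eventually_all_finset S).2 fun j _ => by
        by_cases hc : c j = 0
        · simp [hc]
        · filter_upwards [Metric.ball_mem_nhds 0 (abs_pos.2 hc)] with u hu _
          simpa using (mem_ball_zero_iff.mp hu).le
    filter_upwards [hsmall] with u hu
    simpa [B.greedySum_sum_add_smul hn] using hG _ _ (B.isGreedySet_sum_add_smul hn c hu)
  simpa using IsMinOn.of_isLocalMin_of_convex_univ hloc (convexOn_norm_add_smul _ _) t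

lemma norm_sum_erase_le
    (hG : ∀ (x : X) (Λ : Finset ℕ), IsGreedySet B x Λ → ‖greedySum B x Λ‖ ≤ ‖x‖)
    (S : Finset ℕ) (c : ℕ → ℝ) (n : ℕ) :
    ‖∑ j ∈ S.erase n, c j • B.e j‖ ≤ ‖∑ j ∈ S, c j • B.e j‖ := by
  by_cases hn : n ∈ S
  · rw [← Finset.sum_erase_add S _ hn]
    exact B.norm_sum_le_norm_sum_add_smul hG (Finset.notMem_erase n S) c (c n)
  · rw [Finset.erase_eq_of_notMem hn]

lemma norm_sum_sdiff_le
    (hG : ∀ (x : X) (Λ : Finset ℕ), IsGreedySet B x Λ → ‖greedySum B x Λ‖ ≤ ‖x‖)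
    (S A : Finset ℕ) (c : ℕ → ℝ) :
    ‖∑ j ∈ S \ A, c j • B.e j‖ ≤ ‖∑ j ∈ S, c j • B.e j‖ := by
  induction A using Finset.induction_on with
  | empty => simp
  | insert n A _ ih =>
    rw [Finset.sdiff_insert]
    exact (B.norm_sum_erase_le hG _ c n).trans ih

lemma norm_sub_sum_coord_smul_le
    (hG : ∀ (x : X) (Λ : Finset ℕ), IsGreedySet B x Λ → ‖greedySum B x Λ‖ ≤ ‖x‖)
    (x : X) (Λ : Finset ℕ) :
    ‖x - ∑ j ∈ Λ, B.coord j x • B.e j‖ ≤ ‖x‖ := by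
  obtain ⟨N₀, hN₀⟩ := Λ.exists_nat_subset_range
  have hpartial := B.expansion x
  refine le_of_tendsto_of_tendsto (hpartial.sub_const _).norm hpartial.norm ?_
  filter_upwards [Filter.eventually_ge_atTop N₀] with N hN
  rw [← Finset.sum_sdiff_eq_sub (hN₀.trans (Finset.range_subset_range.2 hN))]
  exact B.norm_sum_sdiff_le hG _ _ _

end RealSchauderBasis

theorem Ct_one_of_Cw_one_general {X : Type*} [NormedAddCommGroup X]
    [NormedSpace ℝ X] (B : RealSchauderBasis X)
    (hG : ∀ (x : X) (Λ : Finset ℕ), IsGreedySet B x Λ → ‖greedySum B x Λ‖ ≤ ‖x‖) :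
    ∀ (x : X) (Λ : Finset ℕ), IsGreedySet B x Λ → ‖x - greedySum B x Λ‖ ≤ ‖x‖ :=
  fun x Λ _ => B.norm_sub_sum_coord_smul_le hG x Λ

theorem Ct_one_of_Cw_one {X : Type*} [NormedAddCommGroup X]
    [NormedSpace ℝ X] [CompleteSpace X] (B : RealSchauderBasis X) (hsn : SemiNormalized B)
    (hG : ∀ (x : X) (Λ : Finset ℕ), IsGreedySet B x Λ → ‖greedySum B x Λ‖ ≤ ‖x‖) :
    ∀ (x : X) (Λ : Finset ℕ), IsGreedySet B x Λ → ‖x - greedySum B x Λ‖ ≤ ‖x‖ :=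
  Ct_one_of_Cw_one_general B hG
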